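/- arXiv:1703.09344 — 2 statements merged into one kernel-verified Lean document; each statement's English description precedes it below -/
import Mathlib

section
/- The function f(x) = (4x+1 - 4/((4x+1)π²)) / (4x+3 - 4/((4x+3)π²)) is strictly increasing for x ≥ 1. -/
/-!
With `c = 4 / π²` and `t = 4x + 1`, the function is `g t / g (t + 2)` for `g t = t - c / t`.
For `√c < s < t` and `d > 0` one has the identity
`g t * g (s + d) - g s * g (t + d)
  = d (t - s) (s t (s + d) (t + d) + c (s + t + d)² - c²) / (s t (s + d) (t + d))`,
whose right-hand side is positive because `s t (s + d) (t + d) > s² t² > c²`.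
-/

open Real Set

lemma sub_div_self_pos {c t : ℝ} (ht : √c < t) : 0 < t - c / t := by
  have ht₀ : 0 < t := (sqrt_nonneg c).trans_lt ht
  have hct : c < t ^ 2 := lt_sq_of_sqrt_lt ht
  rw [sub_pos, div_lt_iff₀ ht₀]
  nlinarith

lemma sub_div_self_shift_cross_sub_eq {c s t d : ℝ} (hs : s ≠ 0) (ht : t ≠ 0)
    (hsd : s + d ≠ 0) (htd : t + d ≠ 0) :
    (t - c / t) * (s + d - c / (s + d)) - (s - c / s) * (t + d - c / (t + d)) =
      d * (t - s) * (s * t * (s + d) * (t + d) + c * (s + t + d) ^ 2 - c ^ 2) /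
        (s * t * (s + d) * (t + d)) := by
  field_simp
  ring

theorem strictMonoOn_sub_div_self_div_shift {c d : ℝ} (hc : 0 ≤ c) (hd : 0 < d) :
    StrictMonoOn (fun t => (t - c / t) / (t + d - c / (t + d))) (Ioi √c) := by
  intro s hs t ht hst
  have hs₀ : 0 < s := (sqrt_nonneg c).trans_lt hs
  have ht₀ : 0 < t := hs₀.trans hst
  have hcs : c < s ^ 2 := lt_sq_of_sqrt_lt hs
  have hct : c < t ^ 2 := lt_sq_of_sqrt_lt ht
  have hsd : √c < s + d := by simp only [mem_Ioi] at hs; linarith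
  have htd : √c < t + d := by simp only [mem_Ioi] at ht; linarith
  rw [div_lt_div_iff₀ (sub_div_self_pos hsd) (sub_div_self_pos htd), ← sub_pos,
    sub_div_self_shift_cross_sub_eq hs₀.ne' ht₀.ne' (by linarith) (by linarith)]
  have hprod : c ^ 2 < s * t * (s + d) * (t + d) :=
    calc c ^ 2 = c * c := sq c
      _ ≤ (s * t) * (s * t) := by nlinarith
      _ < (s * t) * ((s + d) * (t + d)) := by gcongr <;> nlinarith
      _ = s * t * (s + d) * (t + d) := by ring
  have hbracket : 0 < s * t * (s + d) * (t + d) + c * (s + t + d) ^ 2 - c ^ 2 := by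
    nlinarith [mul_nonneg hc (sq_nonneg (s + t + d))]
  have hts : 0 < t - s := sub_pos.mpr hst
  positivity

theorem extrema_ratio_strictMono :
    StrictMonoOn
      (fun x : ℝ =>
        (4 * x + 1 - 4 / ((4 * x + 1) * π ^ 2)) /
          (4 * x + 3 - 4 / ((4 * x + 3) * π ^ 2)))
      (Set.Ici (1 : ℝ)) := by
  have hc : √(4 / π ^ 2) < 5 := by
    rw [sqrt_lt' (by norm_num), div_lt_iff₀ (by positivity)]
    nlinarith [pi_gt_three]
  have hmaps : MapsTo (fun x : ℝ => 4 * x + 1) (Ici 1) (Ioi √(4 / π ^ 2)) := fun x hx => by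
    rw [mem_Ici] at hx
    rw [mem_Ioi]
    linarith
  have hlin : StrictMonoOn (fun x : ℝ => 4 * x + 1) (Ici 1) := fun x _ y _ hxy => by
    dsimp only
    linarith
  refine ((strictMonoOn_sub_div_self_div_shift (by positivity) two_pos).comp hlin hmaps).congr ?_
  intro x _
  simp only [Function.comp, div_div]
  ring_nf
end

section
/- Suppose β ≥ (5 - 4/(5π²))/(3 - 4/(3π²)). Then for every positive integer i, (4i-1 - 4/((4i-1)π²)) · β ≥ 4i+1 - 4/((4i+1)π²). -/
open Real

theorem beta_dominance (β : ℝ)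
    (hβ : β ≥ (5 - 4 / (5 * π ^ 2)) / (3 - 4 / (3 * π ^ 2))) :
    ∀ i : ℕ, 1 ≤ i →
      (4 * (i : ℝ) - 1 - 4 / ((4 * (i : ℝ) - 1) * π ^ 2)) * β ≥
        4 * (i : ℝ) + 1 - 4 / ((4 * (i : ℝ) + 1) * π ^ 2) := by
  intro i hi
  have hx : (1:ℝ) ≤ (i:ℝ) := by exact_mod_cast hi
  set x := (i : ℝ) with hxdef
  have hπ : π > 3 := pi_gt_three
  have hp : π ^ 2 > 9 := by nlinarith
  set p := π ^ 2 with hpdef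
  have hp0 : (0:ℝ) < p := by linarith
  set a := 4 * x - 1 with hadef
  have ha3 : a ≥ 3 := by rw [hadef]; linarith
  have ha0 : (0:ℝ) < a := by linarith
  have hfa : 0 < a - 4 / (a * p) := by
    have h1 : 4 / (a * p) < 1 := by
      rw [div_lt_one (by positivity)]; nlinarith
    linarith
  have hf3 : (0:ℝ) < 3 - 4 / (3 * p) := by
    have h1 : 4 / (3 * p) < 1 := by
      rw [div_lt_one (by positivity)]; nlinarith
    linarith
  have key : (a - 4 / (a * p)) * (5 - 4 / (5 * p)) ≥
      (a + 2 - 4 / ((a + 2) * p)) * (3 - 4 / (3 * p)) := by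
    have e1 : a - 4 / (a * p) = (a ^ 2 * p - 4) / (a * p) := by
      field_simp
    have e2 : (5:ℝ) - 4 / (5 * p) = (25 * p - 4) / (5 * p) := by
      field_simp; ring
    have e3 : a + 2 - 4 / ((a + 2) * p) = ((a + 2) ^ 2 * p - 4) / ((a + 2) * p) := by
      field_simp
    have e4 : (3:ℝ) - 4 / (3 * p) = (9 * p - 4) / (3 * p) := by
      field_simp; ring
    rw [e1, e2, e3, e4, ge_iff_le, div_mul_div_comm, div_mul_div_comm,
      div_le_div_iff₀ (by positivity) (by positivity)]
    have hQ : (0:ℝ) ≤ (8 * p + 30 * p ^ 2) * a ^ 2 + (80 * p + 60 * p ^ 2) * a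
        + (200 * p - 32) := by nlinarith
    nlinarith [mul_nonneg (sub_nonneg.2 ha3) hQ]
  have h1 : (a - 4 / (a * p)) * β ≥
      (a - 4 / (a * p)) * ((5 - 4 / (5 * p)) / (3 - 4 / (3 * p))) :=
    mul_le_mul_of_nonneg_left hβ (le_of_lt hfa)
  have h2 : (a - 4 / (a * p)) * ((5 - 4 / (5 * p)) / (3 - 4 / (3 * p))) ≥
      a + 2 - 4 / ((a + 2) * p) := by
    rw [ge_iff_le, mul_div_assoc', le_div_iff₀ hf3]
    exact key
  have he : 4 * x + 1 = a + 2 := by rw [hadef]; ring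
  calc (4 * x - 1 - 4 / ((4 * x - 1) * p)) * β
      = (a - 4 / (a * p)) * β := by rw [hadef]
    _ ≥ a + 2 - 4 / ((a + 2) * p) := le_trans h2 h1
    _ = 4 * x + 1 - 4 / ((4 * x + 1) * p) := by rw [he]
end
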